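/- Let F : (0,∞)×(0,∞) → ℝ and G : (0,∞) → ℝ be continuously differentiable, with F ≠ 0 everywhere. Define Λ^ρ(ρ,ε) = ρ ∫ F_ρ(ρ,ε) dε + G(ρ) (i.e., Λ^ρ is any function with ∂Λ^ρ/∂ε = ρ ∂F/∂ρ), Λ^v = 0, Λ^ε = F, p = −ρ Λ^ρ / Λ^ε, and η a function with ∂η/∂ε = F and ∂η/∂ρ = Λ^ρ/ρ. Then the Liu identities of the 1D gas model hold: ρΛ^ρ + ρ v Λ^v + p Λ^ε = 0 for all v; ρ η_ρ − Λ^ρ = 0; ρ Λ^v = 0; ρ(η_ε − Λ^ε) = 0; ρ v η_ε − Λ^v p_ε − ρ v Λ^ε = 0 for all v; and v(ρ η_ρ − Λ^ρ) − Λ^v p_ρ = 0 for all v. -/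
import Mathlib


/-- The general solution of the 1D gas dynamics Liu identities
(`Λ^ρ` with `Λ^ρ_ε = ρ F_ρ`, `Λ^v = 0`, `Λ^ε = F`, `p = -ρΛ^ρ/Λ^ε`,
`η_ε = F`, `η_ρ = Λ^ρ/ρ`) satisfies all six Liu identities. -/
theorem gas1d_general_solution_satisfies_Liu_identities
    (F : ℝ → ℝ → ℝ) (G : ℝ → ℝ)
    (hF : Differentiable ℝ fun q : ℝ × ℝ => F q.1 q.2)
    (hG : Differentiable ℝ G)
    (hFne : ∀ r e : ℝ, 0 < r → 0 < e → F r e ≠ 0)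
    (Λρ Λv Λε p η : ℝ → ℝ → ℝ)
    (hΛρ : ∀ r e : ℝ, 0 < r → 0 < e →
      deriv (fun s => Λρ r s) e = r * deriv (fun s => F s e) r)
    (hΛv : ∀ r e : ℝ, Λv r e = 0)
    (hΛε : ∀ r e : ℝ, Λε r e = F r e)
    (hp : ∀ r e : ℝ, p r e = -r * Λρ r e / Λε r e)
    (hηε : ∀ r e : ℝ, 0 < r → 0 < e → deriv (fun s => η r s) e = F r e)
    (hηρ : ∀ r e : ℝ, 0 < r → 0 < e → deriv (fun s => η s e) r = Λρ r e / r) :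
    ∀ r e v : ℝ, 0 < r → 0 < e →
      r * Λρ r e + r * v * Λv r e + p r e * Λε r e = 0 ∧
      r * deriv (fun s => η s e) r - Λρ r e = 0 ∧
      r * Λv r e = 0 ∧
      r * (deriv (fun s => η r s) e - Λε r e) = 0 ∧
      r * v * deriv (fun s => η r s) e - Λv r e * deriv (fun s => p r s) e
        - r * v * Λε r e = 0 ∧
      v * (r * deriv (fun s => η s e) r - Λρ r e)
        - Λv r e * deriv (fun s => p s e) r = 0 := by
  intro r e v hr he
  have hFne' := hFne r e hr he
  refine ⟨?_, ?_, ?_, ?_, ?_, ?_⟩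
  · rw [hp, hΛv, hΛε, div_mul_cancel₀ _ hFne']; ring
  · rw [hηρ r e hr he, mul_div_cancel₀ _ hr.ne']; ring
  · rw [hΛv]; ring
  · rw [hηε r e hr he, hΛε]; ring
  · rw [hηε r e hr he, hΛv, hΛε]; ring
  · rw [hηρ r e hr he, hΛv, mul_div_cancel₀ _ hr.ne']; ring
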